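/- arXiv:1112.0421 — 2 statements merged into one kernel-verified Lean document; each statement's English description precedes it below -/
import Mathlib

section
/- Decryption correctness of the conjugate-coding schemes: for all bit strings i, j, k of length n, applying H_k Y_j H_k to the standard basis vector e_i gives the basis vector e_{i+j} up to an explicit phase: (H_k * Y_j * H_k) *ᵥ e_i = ((−1)^m · I^{W(j)}) • e_{i+j}, where m is the number of indices l with j l = 1 and i l + k l = 1, and I = Complex.I. -/
open Matrix Finset

/-- Hamming weight of a bit string. -/
def hammingW {n : ℕ} (ν : Fin n → ZMod 2) : ℕ :=
  (Finset.univ.filter fun l => ν l = 1).card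

/-- Tensor product of a family of one-qubit matrices, as a matrix indexed by bit strings. -/
def tens {n : ℕ} (A : Fin n → Matrix (ZMod 2) (ZMod 2) ℂ) :
    Matrix (Fin n → ZMod 2) (Fin n → ZMod 2) ℂ :=
  Matrix.of fun x y => ∏ l, A l (x l) (y l)

/-- The Hadamard matrix. -/
noncomputable def Hmat : Matrix (ZMod 2) (ZMod 2) ℂ :=
  (1 / Real.sqrt 2 : ℝ) • !![1, 1; 1, -1]

/-- The Hadamard pattern `H_k = ⨂_l H^{k l}`. -/
noncomputable def Hpat {n : ℕ} (k : Fin n → ZMod 2) :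
    Matrix (Fin n → ZMod 2) (Fin n → ZMod 2) ℂ :=
  tens (fun l => Hmat ^ (k l).val)

/-- The Pauli matrix `Y`. -/
def Ymat : Matrix (ZMod 2) (ZMod 2) ℂ :=
  !![0, -Complex.I; Complex.I, 0]

/-- The Pauli pattern `Y_j = ⨂_l Y^{j l}`. -/
def Ypat {n : ℕ} (j : Fin n → ZMod 2) :
    Matrix (Fin n → ZMod 2) (Fin n → ZMod 2) ℂ :=
  tens (fun l => Ymat ^ (j l).val)

/-!
Tensor products multiply factorwise, so `H_k Y_j H_k = ⨂_l H^{k l} Y^{j l} H^{k l}` and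
`H_k Y_j H_k e_i` is the product of the one-qubit entries. Since `H² = 1` and `H Y H = -Y`,
each factor is `± Y^{j l}`, and `Y e_c = I (-1)^c e_{c+1}`; so the factor at `l` sends `e_{i l}`
to `(-1)^{j l (i l + k l)} I^{j l} e_{i l + j l}`, and the phases multiply to the stated one.
-/

theorem ZMod.eq_zero_or_eq_one (b : ZMod 2) : b = 0 ∨ b = 1 := by
  revert b; decide

theorem Fintype.prod_single_one_apply {ι R : Type*} {β : ι → Type*} [Fintype ι] [DecidableEq ι]
    [∀ l, DecidableEq (β l)] [CommMonoidWithZero R] (x y : ∀ l, β l) :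
    ∏ l, (Pi.single (y l) 1 : β l → R) (x l) = (Pi.single y 1 : (∀ l, β l) → R) x := by
  simp only [Pi.single_apply, prod_boole, ← funext_iff]

theorem tens_mul {n : ℕ} (A B : Fin n → Matrix (ZMod 2) (ZMod 2) ℂ) :
    tens A * tens B = tens fun l => A l * B l := by
  ext x y
  simp only [tens, mul_apply, of_apply, Fintype.prod_sum, prod_mul_distrib]

theorem tens_mulVec_single_one_apply {n : ℕ} (A : Fin n → Matrix (ZMod 2) (ZMod 2) ℂ)
    (i x : Fin n → ZMod 2) : (tens A *ᵥ Pi.single i 1) x = ∏ l, A l (x l) (i l) := by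
  simp [tens]

theorem one_div_sqrt_two_mul_self : (1 / √2 : ℝ) * (1 / √2) = 2⁻¹ := by
  rw [div_mul_div_comm, one_mul, Real.mul_self_sqrt zero_le_two, one_div]

-- `ZMod 2` is definitionally `Fin 2`, where the `!![…]` entry lemmas apply.
theorem Hmat_mul_self : Hmat * Hmat = 1 := by
  change ((1 / √2 : ℝ) • !![(1 : ℂ), 1; 1, -1]) * ((1 / √2 : ℝ) • !![(1 : ℂ), 1; 1, -1])
    = (1 : Matrix (Fin 2) (Fin 2) ℂ)
  rw [smul_mul_smul_comm, one_div_sqrt_two_mul_self]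
  simp [one_fin_two, smul_of]
  norm_num

theorem Hmat_mul_Ymat_mul_Hmat : Hmat * Ymat * Hmat = -Ymat := by
  change ((1 / √2 : ℝ) • !![(1 : ℂ), 1; 1, -1]) * !![0, -Complex.I; Complex.I, 0] *
      ((1 / √2 : ℝ) • !![(1 : ℂ), 1; 1, -1])
    = -(!![0, -Complex.I; Complex.I, 0] : Matrix (Fin 2) (Fin 2) ℂ)
  rw [smul_mul, smul_mul_smul_comm, one_div_sqrt_two_mul_self]
  norm_num [smul_of]
  constructor <;> ring

theorem Hmat_pow_mul_Ymat_pow_mul_Hmat_pow (κ b : ZMod 2) :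
    Hmat ^ κ.val * Ymat ^ b.val * Hmat ^ κ.val
      = (if b = 1 ∧ κ = 1 then -1 else 1 : ℂ) • Ymat ^ b.val := by
  obtain rfl | rfl := κ.eq_zero_or_eq_one <;> obtain rfl | rfl := b.eq_zero_or_eq_one <;>
    simp [ZMod.val_one, Hmat_mul_self, Hmat_mul_Ymat_mul_Hmat]

theorem Ymat_pow_apply (b a c : ZMod 2) :
    (Ymat ^ b.val) a c = (if b = 1 ∧ c = 1 then -1 else 1) * (if b = 1 then Complex.I else 1)
      * (Pi.single (c + b) 1 : ZMod 2 → ℂ) a := by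
  obtain rfl | rfl := b.eq_zero_or_eq_one <;> obtain rfl | rfl := a.eq_zero_or_eq_one <;>
    obtain rfl | rfl := c.eq_zero_or_eq_one <;>
    simp only [ZMod.val_zero, ZMod.val_one, pow_zero, pow_one] <;>
    simp [Ymat, one_apply, CharTwo.add_self_eq_zero] <;> rfl

theorem Hmat_pow_mul_Ymat_pow_mul_Hmat_pow_apply (κ b a c : ZMod 2) :
    (Hmat ^ κ.val * Ymat ^ b.val * Hmat ^ κ.val) a c
      = (if b = 1 ∧ c + κ = 1 then -1 else 1) * (if b = 1 then Complex.I else 1)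
        * (Pi.single (c + b) 1 : ZMod 2 → ℂ) a := by
  rw [Hmat_pow_mul_Ymat_pow_mul_Hmat_pow, Matrix.smul_apply, Ymat_pow_apply, smul_eq_mul]
  obtain rfl | rfl := κ.eq_zero_or_eq_one <;> obtain rfl | rfl := b.eq_zero_or_eq_one <;>
    obtain rfl | rfl := c.eq_zero_or_eq_one <;> simp [CharTwo.add_self_eq_zero]

/-- Decryption correctness: `H_k Y_j H_k e_i` equals `e_{i+j}` up to an explicit phase. -/
theorem decryption_correctness {n : ℕ} (i j k : Fin n → ZMod 2) :
    (Hpat k * Ypat j * Hpat k) *ᵥ (Pi.single i (1 : ℂ))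
      = (((-1 : ℂ) ^ (Finset.univ.filter
            (fun l : Fin n => j l = 1 ∧ i l + k l = 1)).card)
          * Complex.I ^ hammingW j) •
          (Pi.single (i + j) (1 : ℂ) : (Fin n → ZMod 2) → ℂ) := by
  funext x
  rw [Hpat, Ypat, tens_mul, tens_mul, tens_mulVec_single_one_apply]
  simp only [Hmat_pow_mul_Ymat_pow_mul_Hmat_pow_apply, prod_mul_distrib, ← prod_filter, prod_const]
  rw [Pi.smul_apply, smul_eq_mul, hammingW, ← Fintype.prod_single_one_apply]
  rfl
end

section
/- Key-extraction attack on the entanglement-based public key: for all bit strings i, k, y of length n, if the y-component of H^{⊗n} applied to e_i + e_{i+k} is nonzero, then Σ_l (y l)·(k l) = 0 in ZMod 2 (the measurement outcome y satisfies the linear equation y · k = 0). -/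
/-! The Hadamard entries are `H a b = 2^{-1/2} (-1)^{ab}`, so `H^{⊗n} x z = 2^{-n/2} (-1)^{x·z}`.
The `y`-amplitude of `H^{⊗n}(e_i + e_{i+k})` is therefore `2^{-n/2} (-1)^{y·i} (1 + (-1)^{y·k})`,
which vanishes when `y·k = 1`. -/

open Matrix Finset

lemma AddChar.map_sum_eq_prod {ι A M : Type*} [AddCommMonoid A] [CommMonoid M]
    (ψ : AddChar A M) (s : Finset ι) (f : ι → A) : ψ (∑ l ∈ s, f l) = ∏ l ∈ s, ψ (f l) := by
  induction s using Finset.cons_induction with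
  | empty => simp
  | cons a s ha ih => simp [ih, AddChar.map_add_eq_mul]

noncomputable def signChar : AddChar (ZMod 2) ℂ := AddChar.zmodChar 2 (ζ := -1) (by norm_num)

lemma signChar_one : signChar 1 = -1 := by
  simp [signChar, AddChar.zmodChar_apply, ZMod.val_one]

lemma Hmat_apply (a b : ZMod 2) : Hmat a b = ((1 / Real.sqrt 2 : ℝ) : ℂ) * signChar (a * b) := by
  change (1 / Real.sqrt 2 : ℝ) • (!![(1 : ℂ), 1; 1, -1] : Matrix (Fin 2) (Fin 2) ℂ) a b = _
  rw [Complex.real_smul]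
  congr 1
  obtain rfl | rfl : a = 0 ∨ a = 1 := by revert a; decide
  all_goals obtain rfl | rfl : b = 0 ∨ b = 1 := by revert b; decide
  all_goals simp only [mul_zero, mul_one, AddChar.map_zero_eq_one, signChar_one]
  all_goals rfl

lemma tens_apply_of_forall_apply_eq {n : ℕ} {A : Fin n → Matrix (ZMod 2) (ZMod 2) ℂ} {c : ℂ}
    {ψ : AddChar (ZMod 2) ℂ} (hA : ∀ l a b, A l a b = c * ψ (a * b)) (x z : Fin n → ZMod 2) :
    tens A x z = c ^ n * ψ (x ⬝ᵥ z) := by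
  simp [tens, hA, prod_mul_distrib, dotProduct, AddChar.map_sum_eq_prod]

/-- If the outcome `y` of measuring `H^{⊗n} (e_i + e_{i⊕k})` has nonzero amplitude,
then `y · k = 0` in `ZMod 2`. -/
theorem measurement_outcome_orthogonal {n : ℕ} (i k y : Fin n → ZMod 2)
    (h : ((tens fun _ : Fin n => Hmat) *ᵥ
        (Pi.single i (1 : ℂ) + Pi.single (i + k) (1 : ℂ))) y ≠ 0) :
    ∑ l, y l * k l = 0 := by
  by_contra hk
  have hyk : y ⬝ᵥ k = 1 := Fin.eq_one_of_ne_zero _ hk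
  apply h
  have hH := tens_apply_of_forall_apply_eq (n := n) (fun _ => Hmat_apply)
  rw [mulVec_add, Pi.add_apply, mulVec_single_one, mulVec_single_one, col_apply, col_apply,
    hH, hH, dotProduct_add, AddChar.map_add_eq_mul, hyk, signChar_one]
  ring
end
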